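/- Let x, y, z be roots of unity and let p, q, r ≥ 1 be integers with (q,y) ≠ (1,1) and (r,z) ≠ (1,1). Then Ti_{p,q,r}(x,y,z) = y·z·2^{3−p−q−r}·( ti_r(z)·S̃_{p;q}(x;y) − S̃_{p,r;q}(x,z;y) ), i.e., 8·∑_{0<n_1<n_2<n_3} x^{n_1}·y^{n_2}·z^{n_3}/((2n_1−1)^p·(2n_2−2)^q·(2n_3−3)^r) = y·z·2^{3−p−q−r}·( ti_r(z)·∑_{n=1}^∞ t_n(p;x)·y^n/n^q − ∑_{n=1}^∞ t_n(p;x)·t_n(r;z)·y^n/n^q ). -/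

import Mathlib

open Filter Finset

/-- Limit of a sequence of complex numbers (junk value if divergent). -/
noncomputable def seqLim (f : ℕ → ℂ) : ℂ := lim (Filter.map f Filter.atTop)

/-- Finite sum `t_n(p;z) = ∑_{k=1}^n z^k/(k-1/2)^p`. -/
noncomputable def tFin (p : ℕ) (z : ℂ) (n : ℕ) : ℂ :=
  ∑ k ∈ Finset.Icc 1 n, z ^ k / ((k : ℂ) - 1/2) ^ p

/-- t-polylogarithm `ti_p(z) = ∑_{n=1}^∞ z^n/(n-1/2)^p`, as limit of partial sums. -/
noncomputable def tpoly (p : ℕ) (z : ℂ) : ℂ :=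
  seqLim (fun N => ∑ n ∈ Finset.Icc 1 N, z ^ n / ((n : ℂ) - 1/2) ^ p)


/-- Cyclotomic double T-value
`Ti_{p,q}(x,y) = 4 ∑_{0<n1<n2} x^{n1} y^{n2}/((2n1-1)^p (2n2-2)^q)`, as limit of partial sums. -/
noncomputable def Ti2 (p q : ℕ) (x y : ℂ) : ℂ :=
  4 * seqLim (fun N => ∑ n2 ∈ Finset.Icc 1 N, ∑ n1 ∈ Finset.Icc 1 (n2 - 1),
    x ^ n1 * y ^ n2 / ((2 * (n1 : ℂ) - 1) ^ p * (2 * (n2 : ℂ) - 2) ^ q))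

/-- `S̃_{p;q}(x;y) = ∑_{n=1}^∞ t_n(p;x) y^n/n^q`, as limit of partial sums. -/
noncomputable def Stilde (p q : ℕ) (x y : ℂ) : ℂ :=
  seqLim (fun N => ∑ n ∈ Finset.Icc 1 N, tFin p x n * y ^ n / (n : ℂ) ^ q)

/-- Cyclotomic triple T-value
`Ti_{p,q,r}(x,y,z) = 8 ∑_{0<n1<n2<n3} x^{n1} y^{n2} z^{n3}/((2n1-1)^p (2n2-2)^q (2n3-3)^r)`. -/
noncomputable def Ti3 (p q r : ℕ) (x y z : ℂ) : ℂ :=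
  8 * seqLim (fun N => ∑ n3 ∈ Finset.Icc 1 N, ∑ n2 ∈ Finset.Icc 1 (n3 - 1),
    ∑ n1 ∈ Finset.Icc 1 (n2 - 1),
      x ^ n1 * y ^ n2 * z ^ n3 /
        ((2 * (n1 : ℂ) - 1) ^ p * (2 * (n2 : ℂ) - 2) ^ q * (2 * (n3 : ℂ) - 3) ^ r))

/-- `S̃_{p1,p2;q}(z1,z2;y) = ∑_{n=1}^∞ t_n(p1;z1) t_n(p2;z2) y^n/n^q`. -/
noncomputable def Stilde2 (p1 p2 q : ℕ) (z1 z2 y : ℂ) : ℂ :=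
  seqLim (fun N => ∑ n ∈ Finset.Icc 1 N, tFin p1 z1 n * tFin p2 z2 n * y ^ n / (n : ℂ) ^ q)

/-!
Substituting `n₂ = m + 1`, `n₃ = n + 1` turns the `N`-th partial sum of the triple series into
`y z 2^(-p-q-r) ∑_{n<N} zⁿ/(n-1/2)^r ∑_{m<n} t_m(p;x) y^m/m^q`, and summation by parts rewrites
it as `y z 2^(-p-q-r) (t_{N-1}(r;z) B_{N-1} - S_{N-1})`, where `B` and `S` are the partial sums of
`S̃_{p;q}(x;y)` and `S̃_{p,r;q}(x,z;y)`. So the theorem reduces to the convergence of three series.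

For `|w| = 1`, `(s,w) ≠ (1,1)` and `c ≤ 1/2`, the series `∑ wⁿ/(n-c)^s` converges with tail
`O(1/N)`: by Abel's estimate in Dirichlet's test if `w ≠ 1`, by comparison with `∑ 1/n²` if
`w = 1`. With `c = 1/2` this gives `ti_r(z)`; with `c = 0` the series `D = ∑ yⁿ/n^q`. Since
`|t_n(p;x)| = O(√n)`, summation by parts against the tails of `D` shows that `B` converges, and
`S_N = ti_r(z) B_N + ∑_{n≤N} (t_n(r;z) - ti_r(z)) t_n(p;x) yⁿ/n^q`, where the last series converges
absolutely, its terms being `O(n^(-3/2))`.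
-/

open Topology

section Summation

theorem sum_Icc_one_sub_sum_Icc_one {G : Type*} [AddCommGroup G] (f : ℕ → G) {N M : ℕ}
    (h : N ≤ M) :
    ∑ n ∈ Icc 1 M, f n - ∑ n ∈ Icc 1 N, f n = ∑ n ∈ Ioc N M, f n := by
  have hIcc (n : ℕ) : Icc 1 n = Ioc 0 n := Icc_add_one_left_eq_Ioc 0 n
  rw [sub_eq_iff_eq_add', hIcc, hIcc, sum_Ioc_consecutive f N.zero_le h]

theorem sum_Icc_one_eq_sum_range {M : Type*} [AddCommMonoid M] (f : ℕ → M) (N : ℕ) :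
    ∑ n ∈ Icc 1 N, f n = ∑ n ∈ range N, f (n + 1) := by
  rw [← Ico_add_one_right_eq_Icc, sum_Ico_eq_sum_range]
  simp [add_comm]

theorem sum_Icc_one_eq_sum_Icc_one_sub_one {M : Type*} [AddCommMonoid M] (g : ℕ → M)
    (hg : g 1 = 0) (K : ℕ) : ∑ n ∈ Icc 1 K, g n = ∑ n ∈ Icc 1 (K - 1), g (n + 1) := by
  cases K with
  | zero => simp
  | succ K => simp [sum_Icc_one_eq_sum_range, sum_range_succ' _ K, hg]

theorem sum_Icc_mul_sum_Icc_sub_one {R : Type*} [CommRing R] (u v : ℕ → R) (N : ℕ) :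
    ∑ n ∈ Icc 1 N, u n * ∑ m ∈ Icc 1 (n - 1), v m
      = (∑ n ∈ Icc 1 N, u n) * ∑ n ∈ Icc 1 N, v n
        - ∑ n ∈ Icc 1 N, (∑ k ∈ Icc 1 n, u k) * v n := by
  induction N with
  | zero => simp
  | succ N ih =>
    simp only [sum_Icc_succ_top (Nat.le_add_left 1 N), ih, Nat.add_sub_cancel]
    ring

variable {R : Type*} [Ring R] [TopologicalSpace R] [IsTopologicalRing R]

theorem Summable.tendsto_sum_Icc_one {f : ℕ → R} (hf : Summable f) :
    Tendsto (fun N => ∑ n ∈ Icc 1 N, f n) atTop (𝓝 (∑' n, f (n + 1))) := by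
  simpa only [sum_Icc_one_eq_sum_range] using
    ((summable_nat_add_iff 1).2 hf).hasSum.tendsto_sum_nat

theorem exists_tendsto_sum_Icc_mul {S w : ℕ → R} {L LW : R}
    (hw : Tendsto (fun N => ∑ n ∈ Icc 1 N, w n) atTop (𝓝 LW))
    (hS : Summable fun n => (S n - L) * w n) :
    ∃ l, Tendsto (fun N => ∑ n ∈ Icc 1 N, S n * w n) atTop (𝓝 l) := by
  refine ⟨_, ((hw.const_mul L).add hS.tendsto_sum_Icc_one).congr fun N => ?_⟩
  rw [mul_sum, ← sum_add_distrib]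
  exact sum_congr rfl fun n _ => by noncomm_ring

end Summation

theorem tendsto_const_div_add_one (C : ℝ) :
    Tendsto (fun N : ℕ => C / ((N : ℝ) + 1)) atTop (𝓝 0) := by
  simpa [div_eq_mul_inv] using (tendsto_one_div_add_atTop_nhds_zero_nat (𝕜 := ℝ)).const_mul C

section NormedSeries

variable {E : Type*} [NormedAddCommGroup E]

theorem exists_tendsto_of_norm_sub_le [CompleteSpace E] {S : ℕ → E} {ρ : ℕ → ℝ}
    (hρ : Tendsto ρ atTop (𝓝 0)) (h : ∀ N M, N ≤ M → ‖S M - S N‖ ≤ ρ N) :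
    ∃ L, Tendsto S atTop (𝓝 L) ∧ ∀ N, ‖S N - L‖ ≤ ρ N := by
  have hS : CauchySeq S := Metric.cauchySeq_iff'.2 fun ε hε => by
    obtain ⟨N, hN⟩ := eventually_atTop.1 (hρ.eventually (gt_mem_nhds hε))
    exact ⟨N, fun M hM => by rw [dist_eq_norm]; exact (h N M hM).trans_lt (hN N le_rfl)⟩
  obtain ⟨L, hL⟩ := cauchySeq_tendsto_of_complete hS
  refine ⟨L, hL, fun N => ?_⟩
  rw [norm_sub_rev]
  exact le_of_tendsto (hL.sub_const (S N)).norm (eventually_atTop.2 ⟨N, h N⟩)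

theorem norm_sum_Ioc_smul_le [NormedSpace ℝ E] {a : ℕ → ℝ} {g : ℕ → E} {B : ℝ} {N M : ℕ}
    (ha : AntitoneOn a (Set.Ioi N)) (ha0 : ∀ n, N < n → 0 ≤ a n)
    (hg : ∀ n, ‖∑ i ∈ range n, g i‖ ≤ B) (hNM : N ≤ M) :
    ‖∑ n ∈ Ioc N M, a n • g n‖ ≤ 2 * B * a (N + 1) := by
  have hB : 0 ≤ B := by simpa using hg 0
  have haN : 0 ≤ a (N + 1) := ha0 _ N.lt_succ_self
  rcases hNM.eq_or_lt with rfl | hlt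
  · simp only [Ioc_self, sum_empty, norm_zero]
    positivity
  have hstep : ∀ i ∈ Ioc N (M - 1),
      ‖(a (i + 1) - a i) • ∑ k ∈ range (i + 1), g k‖ ≤ (a i - a (i + 1)) * B := by
    intro i hi
    rw [mem_Ioc] at hi
    have hle : a (i + 1) ≤ a i :=
      ha (Set.mem_Ioi.2 hi.1) (Set.mem_Ioi.2 (by omega)) i.le_succ
    rw [norm_smul, Real.norm_of_nonpos (by linarith : a (i + 1) - a i ≤ 0), neg_sub]
    exact mul_le_mul_of_nonneg_left (hg _) (by linarith)
  have htele : ∑ i ∈ Ioc N (M - 1), (a i - a (i + 1)) = a (N + 1) - a M := by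
    rw [← Ico_add_one_add_one_eq_Ioc, Nat.sub_add_cancel (by omega), ← neg_sub (a M),
      ← sum_Ico_sub a hlt, ← sum_neg_distrib]
    simp only [neg_sub, Nat.succ_eq_add_one]
  have haM : 0 ≤ a M := ha0 _ hlt
  rw [sum_Ioc_by_parts a g hlt]
  calc _ ≤ ‖a M • ∑ i ∈ range (M + 1), g i‖ + ‖a (N + 1) • ∑ i ∈ range (N + 1), g i‖
        + ∑ i ∈ Ioc N (M - 1), ‖(a (i + 1) - a i) • ∑ k ∈ range (i + 1), g k‖ :=
        (norm_sub_le _ _).trans (add_le_add (norm_sub_le _ _) (norm_sum_le _ _))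
    _ ≤ a M * B + a (N + 1) * B + (a (N + 1) - a M) * B := by
        rw [← htele, sum_mul]
        gcongr with i hi
        · rw [norm_smul, Real.norm_of_nonneg haM]; gcongr; exact hg _
        · rw [norm_smul, Real.norm_of_nonneg haN]; gcongr; exact hg _
        · exact hstep i hi
    _ = 2 * B * a (N + 1) := by ring

theorem exists_tendsto_sum_Icc_smul [CompleteSpace E] [NormedSpace ℝ E] {a : ℕ → ℝ} {g : ℕ → E}
    {B : ℝ} (ha : AntitoneOn a (Set.Ioi 0)) (ha0 : ∀ n, 0 < n → 0 ≤ a n)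
    (ha_lim : Tendsto a atTop (𝓝 0)) (hg : ∀ n, ‖∑ i ∈ range n, g i‖ ≤ B) :
    ∃ L, Tendsto (fun N => ∑ n ∈ Icc 1 N, a n • g n) atTop (𝓝 L) ∧
      ∀ N, ‖∑ n ∈ Icc 1 N, a n • g n - L‖ ≤ 2 * B * a (N + 1) := by
  refine exists_tendsto_of_norm_sub_le ?_ fun N M h => ?_
  · simpa using (ha_lim.comp (tendsto_add_atTop_nat 1)).const_mul (2 * B)
  rw [sum_Icc_one_sub_sum_Icc_one _ h]
  exact norm_sum_Ioc_smul_le (ha.mono (Set.Ioi_subset_Ioi N.zero_le))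
    (fun n hn => ha0 n (by omega)) hg h

theorem exists_tendsto_sum_Icc_of_norm_le_div_sq [CompleteSpace E] {f : ℕ → E} {K : ℝ}
    (hf : ∀ n, 0 < n → ‖f n‖ ≤ K / (n : ℝ) ^ 2) :
    ∃ L, Tendsto (fun N => ∑ n ∈ Icc 1 N, f n) atTop (𝓝 L) ∧
      ∀ N, ‖∑ n ∈ Icc 1 N, f n - L‖ ≤ 2 * K / ((N : ℝ) + 1) := by
  have hK : 0 ≤ K := by simpa using (norm_nonneg _).trans (hf 1 one_pos)
  refine exists_tendsto_of_norm_sub_le (tendsto_const_div_add_one _) fun N M h => ?_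
  rw [sum_Icc_one_sub_sum_Icc_one _ h]
  calc ‖∑ n ∈ Ioc N M, f n‖ ≤ ∑ n ∈ Ioc N M, K * ((n : ℝ) ^ 2)⁻¹ :=
        norm_sum_le_of_le _ fun n hn => by
          rw [← div_eq_mul_inv]; exact hf n (N.zero_le.trans_lt (mem_Ioc.1 hn).1)
    _ ≤ K * (2 / ((N : ℝ) + 1)) := by
        rw [← mul_sum, ← Ioo_add_one_right_eq_Ioc]
        gcongr
        exact sum_Ioo_inv_sq_le N (M + 1)
    _ = 2 * K / ((N : ℝ) + 1) := by ring

theorem summable_of_norm_le_sqrt_div_sq [CompleteSpace E] {f : ℕ → E} {K : ℝ}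
    (hf : ∀ n, 0 < n → ‖f n‖ ≤ K * √n / (n : ℝ) ^ 2) : Summable f := by
  refine .of_norm_bounded_eventually_nat
    ((Real.summable_nat_rpow_inv.2 (by norm_num : (1 : ℝ) < 3 / 2)).mul_left K)
    (eventually_atTop.2 ⟨1, fun n hn => (hf n hn).trans_eq ?_⟩)
  have hn : (0 : ℝ) < n := by exact_mod_cast hn
  rw [Real.sqrt_eq_rpow, mul_div_assoc, ← Real.rpow_natCast, ← Real.rpow_sub hn,
    ← Real.rpow_neg hn.le]
  norm_num

end NormedSeries

theorem tendsto_sqrt_div_add_one : Tendsto (fun N : ℕ => √N / ((N : ℝ) + 1)) atTop (𝓝 0) := by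
  have hinv : Tendsto (fun N : ℕ => (√((N : ℝ) + 1))⁻¹) atTop (𝓝 0) :=
    tendsto_inv_atTop_zero.comp <| Real.tendsto_sqrt_atTop.comp <|
      tendsto_atTop_add_const_right _ 1 tendsto_natCast_atTop_atTop
  refine squeeze_zero (fun N => by positivity) (fun N => ?_) hinv
  rw [← Real.sqrt_div_self]
  gcongr
  linarith

theorem sum_Icc_inv_le_two_sqrt (n : ℕ) : ∑ k ∈ Icc 1 n, ((k : ℝ))⁻¹ ≤ 2 * √n := by
  induction n with
  | zero => simp
  | succ n ih =>
    rw [sum_Icc_succ_top (Nat.le_add_left 1 n)]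
    set s := √(n : ℝ)
    set t := √((n + 1 : ℕ) : ℝ)
    have hs : s ^ 2 = n := Real.sq_sqrt n.cast_nonneg
    have ht : t ^ 2 = n + 1 := by rw [Real.sq_sqrt (Nat.cast_nonneg _)]; push_cast; ring
    have hst : s < t := Real.sqrt_lt_sqrt n.cast_nonneg (by simp)
    have ht1 : 1 ≤ t := by nlinarith [Real.sqrt_nonneg (n : ℝ)]
    have : (((n + 1 : ℕ) : ℝ))⁻¹ ≤ 2 * (t - s) := by
      rw [inv_le_iff_one_le_mul₀ (by positivity)]
      have hfac : 2 * (t - s) * ((n + 1 : ℕ) : ℝ) - 1 = (t - s) * (2 * t ^ 2 - t - s) := by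
        push_cast; linear_combination (-2 * (t - s) + 1) * ht - hs
      nlinarith [mul_nonneg (sub_nonneg.2 hst.le) (by nlinarith : 0 ≤ 2 * t ^ 2 - t - s)]
    linarith

theorem norm_geom_sum_le {𝕜 : Type*} [NormedField 𝕜] {w : 𝕜} (hw : ‖w‖ ≤ 1) (hw1 : w ≠ 1)
    (n : ℕ) : ‖∑ i ∈ range n, w ^ i‖ ≤ 2 / ‖w - 1‖ := by
  rw [geom_sum_eq hw1, norm_div]
  gcongr
  calc ‖w ^ n - 1‖ ≤ ‖w ^ n‖ + ‖(1 : 𝕜)‖ := norm_sub_le _ _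
    _ ≤ 2 := by rw [norm_pow, norm_one]; linarith [pow_le_one₀ (n := n) (norm_nonneg w) hw]

theorem inv_sub_pow_le {n : ℕ} (hn : 0 < n) {c : ℝ} (hc : c ≤ 1 / 2) {k s : ℕ} (hks : k ≤ s) :
    (((n : ℝ) - c) ^ s)⁻¹ ≤ 2 ^ s / (n : ℝ) ^ k := by
  have hn1 : (1 : ℝ) ≤ n := by exact_mod_cast hn
  have hn2 : 0 < (n : ℝ) / 2 := by positivity
  calc (((n : ℝ) - c) ^ s)⁻¹ ≤ (((n : ℝ) / 2) ^ s)⁻¹ :=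
        inv_anti₀ (pow_pos hn2 s) (pow_le_pow_left₀ hn2.le (by linarith) s)
    _ = 2 ^ s / (n : ℝ) ^ s := by rw [div_pow, inv_div]
    _ ≤ 2 ^ s / (n : ℝ) ^ k := by gcongr

theorem norm_pow_div_sub_pow {w : ℂ} (hw : ‖w‖ = 1) {n : ℕ} (hn : 0 < n) {c : ℝ} (hc : c ≤ 1 / 2)
    (s : ℕ) : ‖w ^ n / ((n : ℂ) - c) ^ s‖ = (((n : ℝ) - c) ^ s)⁻¹ := by
  have hn1 : (1 : ℝ) ≤ n := by exact_mod_cast hn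
  rw [norm_div, norm_pow, norm_pow, hw, one_pow, one_div, ← Complex.ofReal_natCast,
    ← Complex.ofReal_sub, Complex.norm_real, Real.norm_of_nonneg (by linarith)]

theorem exists_tendsto_sum_pow_div_sub_pow {w : ℂ} (hw : ‖w‖ = 1) {c : ℝ} (hc : c ≤ 1 / 2)
    {s : ℕ} (hs : 1 ≤ s) (hws : ¬(s = 1 ∧ w = 1)) :
    ∃ L C, Tendsto (fun N : ℕ => ∑ n ∈ Icc 1 N, w ^ n / ((n : ℂ) - c) ^ s) atTop (𝓝 L) ∧
      ∀ N : ℕ, ‖∑ n ∈ Icc 1 N, w ^ n / ((n : ℂ) - c) ^ s - L‖ ≤ C / ((N : ℝ) + 1) := by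
  by_cases hw1 : w = 1
  · have hs2 : 2 ≤ s := by
      by_contra
      exact hws ⟨by omega, hw1⟩
    obtain ⟨L, hL, hrate⟩ := exists_tendsto_sum_Icc_of_norm_le_div_sq (K := 2 ^ s)
      (f := fun n => w ^ n / ((n : ℂ) - c) ^ s) fun n hn => by
        rw [norm_pow_div_sub_pow hw hn hc]
        exact inv_sub_pow_le hn hc hs2
    exact ⟨L, _, hL, hrate⟩
  set a : ℕ → ℝ := fun n => (((n : ℝ) - c) ^ s)⁻¹
  have hterm (n : ℕ) : w ^ n / ((n : ℂ) - c) ^ s = a n • w ^ n := by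
    simp only [a, Complex.real_smul]; push_cast; ring
  have ha : AntitoneOn a (Set.Ioi 0) := fun m hm n hn hmn => by
    have hm1 : (1 : ℝ) ≤ m := by exact_mod_cast (hm : 0 < m)
    have : (m : ℝ) ≤ n := by exact_mod_cast hmn
    have hm0 : 0 < (m : ℝ) - c := by linarith
    exact inv_anti₀ (pow_pos hm0 s) (pow_le_pow_left₀ hm0.le (by linarith) s)
  have ha0 (n : ℕ) (hn : 0 < n) : 0 ≤ a n := by
    have hn1 : (1 : ℝ) ≤ n := by exact_mod_cast hn
    have : 0 < (n : ℝ) - c := by linarith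
    positivity
  have ha_le (n : ℕ) (hn : 0 < n) : a n ≤ 2 ^ s / n := by
    simpa using inv_sub_pow_le hn hc hs
  have ha_lim : Tendsto a atTop (𝓝 0) :=
    squeeze_zero' (eventually_atTop.2 ⟨1, ha0⟩) (eventually_atTop.2 ⟨1, ha_le⟩)
      (tendsto_const_div_atTop_nhds_zero_nat _)
  obtain ⟨L, hL, hrate⟩ := exists_tendsto_sum_Icc_smul ha ha0 ha_lim
    (norm_geom_sum_le hw.le hw1)
  simp only [← hterm] at hL hrate
  refine ⟨L, 2 * (2 / ‖w - 1‖) * 2 ^ s, hL, fun N => (hrate N).trans ?_⟩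
  rw [mul_div_assoc]
  gcongr
  exact_mod_cast ha_le (N + 1) N.succ_pos

theorem tendsto_seqLim {f : ℕ → ℂ} (h : ∃ L, Tendsto f atTop (𝓝 L)) :
    Tendsto f atTop (𝓝 (seqLim f)) :=
  tendsto_nhds_limUnder h

section TValues

variable {p q r : ℕ} {x y z : ℂ}

theorem norm_tFin_le (hx : ‖x‖ = 1) (hp : 1 ≤ p) (n : ℕ) : ‖tFin p x n‖ ≤ 2 ^ p * (2 * √n) := by
  calc ‖tFin p x n‖ ≤ ∑ k ∈ Icc 1 n, ‖x ^ k / ((k : ℂ) - 1 / 2) ^ p‖ := norm_sum_le _ _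
    _ ≤ ∑ k ∈ Icc 1 n, 2 ^ p * ((k : ℝ))⁻¹ := sum_le_sum fun k hk => by
        have hk : 0 < k := (mem_Icc.1 hk).1
        have h := norm_pow_div_sub_pow hx hk (c := 1 / 2) le_rfl p
        push_cast at h
        rw [h, ← div_eq_mul_inv]
        exact (inv_sub_pow_le (k := 1) hk le_rfl hp).trans_eq (by rw [pow_one])
    _ ≤ 2 ^ p * (2 * √n) := by rw [← mul_sum]; gcongr; exact sum_Icc_inv_le_two_sqrt n

theorem tendsto_tFin_tpoly (hz : ‖z‖ = 1) (hr : 1 ≤ r) (hrz : ¬(r = 1 ∧ z = 1)) :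
    ∃ C, Tendsto (tFin r z) atTop (𝓝 (tpoly r z)) ∧
      ∀ N : ℕ, ‖tFin r z N - tpoly r z‖ ≤ C / ((N : ℝ) + 1) := by
  obtain ⟨L, C, hL, hC⟩ := exists_tendsto_sum_pow_div_sub_pow hz (c := 1 / 2) le_rfl hr hrz
  push_cast at hL hC
  obtain rfl : tpoly r z = L := hL.limUnder_eq
  exact ⟨C, hL, hC⟩

theorem tendsto_Stilde (hx : ‖x‖ = 1) (hy : ‖y‖ = 1) (hp : 1 ≤ p) (hq : 1 ≤ q)
    (hqy : ¬(q = 1 ∧ y = 1)) :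
    Tendsto (fun N => ∑ n ∈ Icc 1 N, tFin p x n * y ^ n / (n : ℂ) ^ q) atTop
      (𝓝 (Stilde p q x y)) := by
  obtain ⟨LD, C, hD, hDC⟩ := exists_tendsto_sum_pow_div_sub_pow hy (c := 0) (by norm_num) hq hqy
  simp only [Complex.ofReal_zero, sub_zero] at hD hDC
  set D : ℕ → ℂ := fun N => ∑ n ∈ Icc 1 N, y ^ n / (n : ℂ) ^ q
  have hsplit (N : ℕ) : ∑ n ∈ Icc 1 N, tFin p x n * y ^ n / (n : ℂ) ^ q
      = tFin p x N * (D N - LD)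
        - ∑ n ∈ Icc 1 N, x ^ n / ((n : ℂ) - 1 / 2) ^ p * (D (n - 1) - LD) := by
    have hparts : ∑ n ∈ Icc 1 N, x ^ n / ((n : ℂ) - 1 / 2) ^ p * D (n - 1)
        = tFin p x N * D N - ∑ n ∈ Icc 1 N, tFin p x n * (y ^ n / (n : ℂ) ^ q) :=
      sum_Icc_mul_sum_Icc_sub_one _ _ N
    have hT : ∑ n ∈ Icc 1 N, x ^ n / ((n : ℂ) - 1 / 2) ^ p = tFin p x N := rfl
    simp only [mul_sub, sum_sub_distrib, ← sum_mul, hparts, hT, mul_div_assoc]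
    ring
  have hfirst : Tendsto (fun N => tFin p x N * (D N - LD)) atTop (𝓝 0) := by
    refine squeeze_zero_norm (fun N => ?_)
      (by simpa using tendsto_sqrt_div_add_one.const_mul (2 ^ p * 2 * C))
    rw [norm_mul, show 2 ^ p * 2 * C * (√N / ((N : ℝ) + 1)) = 2 ^ p * (2 * √N) * (C / (N + 1))
      by ring]
    exact mul_le_mul (norm_tFin_le hx hp N) (hDC N) (norm_nonneg _) (by positivity)
  obtain ⟨L, hL, -⟩ := exists_tendsto_sum_Icc_of_norm_le_div_sq (K := 2 ^ p * C)
    (f := fun n => x ^ n / ((n : ℂ) - 1 / 2) ^ p * (D (n - 1) - LD)) fun n hn => by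
      have h := norm_pow_div_sub_pow hx hn (c := 1 / 2) le_rfl p
      push_cast at h
      have hD' := hDC (n - 1)
      rw [Nat.cast_sub hn, Nat.cast_one, sub_add_cancel] at hD'
      rw [norm_mul, h, sq, ← div_mul_div_comm]
      exact mul_le_mul ((inv_sub_pow_le (k := 1) hn le_rfl hp).trans_eq (by rw [pow_one])) hD'
        (norm_nonneg _) (by positivity)
  exact tendsto_seqLim ⟨_, (hfirst.sub hL).congr fun N => (hsplit N).symm⟩

theorem tendsto_Stilde2 (hx : ‖x‖ = 1) (hy : ‖y‖ = 1) (hz : ‖z‖ = 1) (hp : 1 ≤ p) (hq : 1 ≤ q)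
    (hr : 1 ≤ r) (hqy : ¬(q = 1 ∧ y = 1)) (hrz : ¬(r = 1 ∧ z = 1)) :
    Tendsto (fun N => ∑ n ∈ Icc 1 N, tFin p x n * tFin r z n * y ^ n / (n : ℂ) ^ q) atTop
      (𝓝 (Stilde2 p r q x z y)) := by
  obtain ⟨C, -, hUC⟩ := tendsto_tFin_tpoly hz hr hrz
  have hsum :
      Summable fun n => (tFin r z n - tpoly r z) * (tFin p x n * y ^ n / (n : ℂ) ^ q) := by
    refine summable_of_norm_le_sqrt_div_sq (K := C * (2 ^ p * 2)) fun n hn => ?_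
    have hn1 : (1 : ℝ) ≤ n := by exact_mod_cast hn
    have hC : 0 ≤ C := by simpa using (norm_nonneg _).trans (hUC 0)
    calc ‖(tFin r z n - tpoly r z) * (tFin p x n * y ^ n / (n : ℂ) ^ q)‖
        = ‖tFin r z n - tpoly r z‖ * (‖tFin p x n‖ / (n : ℝ) ^ q) := by
          rw [norm_mul, norm_div, norm_mul, norm_pow, hy, one_pow, mul_one, norm_pow,
            Complex.norm_natCast]
      _ ≤ C / n * (2 ^ p * (2 * √n) / n) := by
          gcongr
          · exact (hUC n).trans (by gcongr; linarith)
          · exact norm_tFin_le hx hp n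
          · exact le_self_pow₀ hn1 (by omega)
      _ = C * (2 ^ p * 2) * √n / (n : ℝ) ^ 2 := by ring
  obtain ⟨l, hl⟩ := exists_tendsto_sum_Icc_mul (tendsto_Stilde hx hy hp hq hqy) hsum
  exact tendsto_seqLim ⟨l, hl.congr fun N => sum_congr rfl fun n _ => by ring⟩

end TValues

theorem Ti3_partial_sum_eq (p q r : ℕ) (x y z : ℂ) (N : ℕ) :
    ∑ n3 ∈ Icc 1 N, ∑ n2 ∈ Icc 1 (n3 - 1), ∑ n1 ∈ Icc 1 (n2 - 1),
      x ^ n1 * y ^ n2 * z ^ n3 /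
        ((2 * (n1 : ℂ) - 1) ^ p * (2 * (n2 : ℂ) - 2) ^ q * (2 * (n3 : ℂ) - 3) ^ r)
      = y * z / 2 ^ (p + q + r) *
          (tFin r z (N - 1) * ∑ n ∈ Icc 1 (N - 1), tFin p x n * y ^ n / (n : ℂ) ^ q
            - ∑ n ∈ Icc 1 (N - 1), tFin p x n * tFin r z n * y ^ n / (n : ℂ) ^ q) := by
  have hparts := sum_Icc_mul_sum_Icc_sub_one (fun n => z ^ n / ((n : ℂ) - 1 / 2) ^ r)
    (fun n => tFin p x n * y ^ n / (n : ℂ) ^ q) (N - 1)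
  calc _ = ∑ n ∈ Icc 1 (N - 1), y * z / 2 ^ (p + q + r) * (z ^ n / ((n : ℂ) - 1 / 2) ^ r
          * ∑ m ∈ Icc 1 (n - 1), tFin p x m * y ^ m / (m : ℂ) ^ q) := by
        rw [sum_Icc_one_eq_sum_Icc_one_sub_one _ (by simp)]
        refine sum_congr rfl fun n _ => ?_
        rw [Nat.add_sub_cancel, sum_Icc_one_eq_sum_Icc_one_sub_one _ (by simp), mul_sum, mul_sum]
        refine sum_congr rfl fun m _ => ?_
        rw [Nat.add_sub_cancel, tFin, sum_mul, sum_div, mul_sum, mul_sum]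
        refine sum_congr rfl fun k _ => ?_
        rw [Nat.cast_add_one, Nat.cast_add_one, show 2 * (k : ℂ) - 1 = 2 * (k - 1 / 2) by ring,
          show 2 * ((m : ℂ) + 1) - 2 = 2 * m by ring,
          show 2 * ((n : ℂ) + 1) - 3 = 2 * (n - 1 / 2) by ring, mul_pow, mul_pow, mul_pow]
        ring
    _ = _ := by
        rw [← mul_sum, hparts]
        congr 2
        exact sum_congr rfl fun n _ => by simp only [tFin]; ring

theorem stmt17 (x y z : ℂ) (hx : ∃ m : ℕ, 0 < m ∧ x ^ m = 1)
    (hy : ∃ m : ℕ, 0 < m ∧ y ^ m = 1) (hz : ∃ m : ℕ, 0 < m ∧ z ^ m = 1)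
    (p q r : ℕ) (hp : 1 ≤ p) (hq : 1 ≤ q) (hr : 1 ≤ r)
    (hqy : ¬(q = 1 ∧ y = 1)) (hrz : ¬(r = 1 ∧ z = 1)) :
    Ti3 p q r x y z
      = y * z * (2 : ℂ) ^ (3 - (p : ℤ) - (q : ℤ) - (r : ℤ))
          * (tpoly r z * Stilde p q x y - Stilde2 p r q x z y) := by
  have hnorm (w : ℂ) : (∃ m : ℕ, 0 < m ∧ w ^ m = 1) → ‖w‖ = 1 := fun ⟨_, hm, h⟩ =>
    Complex.norm_eq_one_of_pow_eq_one h hm.ne'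
  obtain ⟨-, hU, -⟩ := tendsto_tFin_tpoly (hnorm z hz) hr hrz
  have hB := tendsto_Stilde (hnorm x hx) (hnorm y hy) hp hq hqy
  have hS := tendsto_Stilde2 (hnorm x hx) (hnorm y hy) (hnorm z hz) hp hq hr hqy hrz
  have hshift := tendsto_sub_atTop_nat 1
  have hlim := (((hU.comp hshift).mul (hB.comp hshift)).sub (hS.comp hshift)).const_mul
    (y * z / 2 ^ (p + q + r))
  simp only [Function.comp_def, ← Ti3_partial_sum_eq] at hlim
  have hpow : (2 : ℂ) ^ (3 - (p : ℤ) - (q : ℤ) - (r : ℤ)) = 8 / 2 ^ (p + q + r) := by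
    rw [sub_sub, sub_sub, zpow_sub₀ two_ne_zero, ← add_assoc]
    norm_cast
  rw [Ti3, show seqLim _ = _ from hlim.limUnder_eq, hpow]
  ring
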